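/- Let n ≥ 2, let κ = (κ_1, …, κ_n) be real parameters with κ_j > −1/2, and let F : ℝⁿ → ℝ be twice continuously differentiable. Define F̂ : ℝ^{n−1} → ℝ by F̂(λ_1, …, λ_{n−1}) := F(λ_1, …, λ_{n−1}, 1 − λ_1 − ⋯ − λ_{n−1}). Then for every λ' = (λ_1, …, λ_{n−1}) ∈ ℝ^{n−1}, one has (G_κ F̂)(λ') = (Ĝ_κ F)(λ_1, …, λ_{n−1}, 1 − λ_1 − ⋯ − λ_{n−1}). -/

import Mathlib

/-!
`F̂ = F ∘ ι` for the affine map `ι y = (y, 1 - Σ y)`, whose linear part sends `e_i` to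
`e_i - e_n`. Hence `∂_i F̂ = ∂_i F - ∂_n F` and
`∂_i ∂_j F̂ = F_ij - F_in - F_nj + F_nn` at `ι y`. Both operators have the form
`Σ x_j F_jj - Σ_{j,ℓ} x_j x_ℓ F_jℓ + Σ (c_j - s x_j) F_j`; substituting
`x_n = 1 - Σ y`, the second-order parts agree identically, and the first-order parts agree
because `s = Σ_j c_j` (here `|κ| + n/2 = Σ_j (κ_j + 1/2)`).
-/

/-- Partial derivative `∂g/∂x_i` of a function `g : ℝᵐ → ℝ`. -/
noncomputable def pd {m : ℕ} (i : Fin m) (g : (Fin m → ℝ) → ℝ)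
    (x : Fin m → ℝ) : ℝ :=
  fderiv ℝ g x (Pi.single i 1)

/-- The general Jacobi-type operator in `m` variables with drift coefficients
`c j - s * x j`:
`Σ_j x_j(1-x_j) ∂²F/∂x_j² + Σ_j (c_j - s x_j) ∂F/∂x_j - Σ_{j≠ℓ} x_j x_ℓ ∂²F/∂x_j∂x_ℓ`. -/
noncomputable def jacobiOp (m : ℕ) (c : Fin m → ℝ) (s : ℝ)
    (F : (Fin m → ℝ) → ℝ) (x : Fin m → ℝ) : ℝ :=
  (∑ j, x j * (1 - x j) * pd j (pd j F) x)
  + (∑ j, (c j - s * x j) * pd j F x)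
  - ∑ j, ∑ ℓ, if j = ℓ then 0 else x j * x ℓ * pd j (pd ℓ F) x

open Finset

section

variable {m : ℕ}

lemma pd_sub {f g : (Fin m → ℝ) → ℝ} {x : Fin m → ℝ}
    (hf : DifferentiableAt ℝ f x) (hg : DifferentiableAt ℝ g x) (i : Fin m) :
    pd i (fun y => f y - g y) x = pd i f x - pd i g x := by
  simp only [pd, fderiv_fun_sub hf hg]
  rfl

lemma differentiable_pd {F : (Fin m → ℝ) → ℝ} (hF : ContDiff ℝ 2 F) (i : Fin m) :
    Differentiable ℝ (pd i F) :=
  ((hF.fderiv_right (m := 1) (by norm_num)).differentiable one_ne_zero).clm_apply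
    (differentiable_const _)

lemma sum_ite_eq_zero_eq_sum_sub_sum (v : Fin m → Fin m → ℝ) :
    (∑ j, ∑ ℓ, if j = ℓ then 0 else v j ℓ) = (∑ j, ∑ ℓ, v j ℓ) - ∑ j, v j j := by
  rw [← sum_sub_distrib]
  refine sum_congr rfl fun j _ => ?_
  rw [eq_sub_iff_add_eq, ← Fintype.sum_ite_eq j (v j), ← sum_add_distrib]
  exact sum_congr rfl fun ℓ _ => by split_ifs <;> simp_all

lemma jacobiOp_eq_sum_sub_sum_add_sum (c : Fin m → ℝ) (s : ℝ) (F : (Fin m → ℝ) → ℝ)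
    (x : Fin m → ℝ) :
    jacobiOp m c s F x
      = (∑ j, x j * pd j (pd j F) x) - (∑ j, ∑ ℓ, x j * x ℓ * pd j (pd ℓ F) x)
        + ∑ j, (c j - s * x j) * pd j F x := by
  rw [jacobiOp, sum_ite_eq_zero_eq_sum_sub_sum]
  have hdiag : ∀ j, x j * (1 - x j) * pd j (pd j F) x
      = x j * pd j (pd j F) x - x j * x j * pd j (pd j F) x := fun j => by ring
  simp only [hdiag, sum_sub_distrib]
  ring

-- Written with `dif` rather than `Fin.snoc` so that it is definitionally the map in
-- `jacobi_simplex_lift`.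
noncomputable def simplexLift (m : ℕ) (y : Fin m → ℝ) : Fin (m + 1) → ℝ :=
  fun j => if h : j.val < m then y ⟨j.val, h⟩ else 1 - ∑ k, y k

noncomputable def simplexLiftLinear (m : ℕ) : (Fin m → ℝ) →L[ℝ] (Fin (m + 1) → ℝ) :=
  ContinuousLinearMap.pi fun j =>
    Fin.lastCases (-∑ k, ContinuousLinearMap.proj k) ContinuousLinearMap.proj j

@[simp] lemma simplexLift_castSucc (y : Fin m → ℝ) (j : Fin m) :
    simplexLift m y j.castSucc = y j := by
  simp [simplexLift]

@[simp] lemma simplexLift_last (y : Fin m → ℝ) :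
    simplexLift m y (Fin.last m) = 1 - ∑ k, y k := by
  simp [simplexLift]

@[simp] lemma simplexLiftLinear_apply_castSucc (y : Fin m → ℝ) (j : Fin m) :
    simplexLiftLinear m y j.castSucc = y j := by
  simp [simplexLiftLinear]

@[simp] lemma simplexLiftLinear_apply_last (y : Fin m → ℝ) :
    simplexLiftLinear m y (Fin.last m) = -∑ k, y k := by
  simp [simplexLiftLinear]

lemma simplexLift_eq_add (y : Fin m → ℝ) :
    simplexLift m y = Pi.single (Fin.last m) 1 + simplexLiftLinear m y := by
  ext j
  induction j using Fin.lastCases <;> simp [sub_eq_add_neg, Fin.castSucc_ne_last]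

lemma hasFDerivAt_simplexLift (y : Fin m → ℝ) :
    HasFDerivAt (simplexLift m) (simplexLiftLinear m) y := by
  rw [funext simplexLift_eq_add]
  exact (simplexLiftLinear m).hasFDerivAt.const_add _

lemma simplexLiftLinear_single (i : Fin m) :
    simplexLiftLinear m (Pi.single i 1)
      = Pi.single i.castSucc 1 - Pi.single (Fin.last m) 1 := by
  ext j
  induction j using Fin.lastCases <;> simp [Pi.single_apply, Fin.castSucc_ne_last]

lemma pd_comp_simplexLift {g : (Fin (m + 1) → ℝ) → ℝ} {y : Fin m → ℝ}
    (hg : DifferentiableAt ℝ g (simplexLift m y)) (i : Fin m) :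
    pd i (fun z => g (simplexLift m z)) y
      = pd i.castSucc g (simplexLift m y) - pd (Fin.last m) g (simplexLift m y) := by
  have hcomp : HasFDerivAt (fun z => g (simplexLift m z))
      ((fderiv ℝ g (simplexLift m y)).comp (simplexLiftLinear m)) y :=
    hg.hasFDerivAt.comp y (hasFDerivAt_simplexLift y)
  rw [pd, hcomp.fderiv,
    ContinuousLinearMap.comp_apply, simplexLiftLinear_single, map_sub, pd, pd]

lemma pd_pd_comp_simplexLift {F : (Fin (m + 1) → ℝ) → ℝ} (hF : ContDiff ℝ 2 F)
    (i j : Fin m) (y : Fin m → ℝ) :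
    pd i (pd j (fun z => F (simplexLift m z))) y
      = pd i.castSucc (pd j.castSucc F) (simplexLift m y)
        - pd i.castSucc (pd (Fin.last m) F) (simplexLift m y)
        - pd (Fin.last m) (pd j.castSucc F) (simplexLift m y)
        + pd (Fin.last m) (pd (Fin.last m) F) (simplexLift m y) := by
  have hF1 := hF.differentiable two_ne_zero
  have hpd := differentiable_pd hF
  have hj : pd j (fun z => F (simplexLift m z))
      = fun z => pd j.castSucc F (simplexLift m z) - pd (Fin.last m) F (simplexLift m z) :=
    funext fun z => pd_comp_simplexLift (hF1 _) j
  rw [hj, pd_comp_simplexLift (g := fun x => pd j.castSucc F x - pd (Fin.last m) F x)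
    ((hpd _ _).fun_sub (hpd _ _)), pd_sub (hpd _ _) (hpd _ _),
    pd_sub (hpd _ _) (hpd _ _)]
  ring

lemma sum_diag_sub_quadForm_simplexLift (u : Fin m → ℝ)
    (H : Fin (m + 1) → Fin (m + 1) → ℝ) :
    (∑ j, u j * (H j.castSucc j.castSucc - H j.castSucc (Fin.last m)
        - H (Fin.last m) j.castSucc + H (Fin.last m) (Fin.last m)))
      - (∑ j, ∑ ℓ, u j * u ℓ * (H j.castSucc ℓ.castSucc - H j.castSucc (Fin.last m)
        - H (Fin.last m) ℓ.castSucc + H (Fin.last m) (Fin.last m)))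
      = (∑ a, simplexLift m u a * H a a)
        - ∑ a, ∑ b, simplexLift m u a * simplexLift m u b * H a b := by
  have hswap : ∑ j, ∑ ℓ, u j * u ℓ * H (Fin.last m) ℓ.castSucc
      = ∑ ℓ, (∑ j, u j) * u ℓ * H (Fin.last m) ℓ.castSucc := by
    rw [sum_comm]
    simp only [← sum_mul]
  simp only [Fin.sum_univ_castSucc, simplexLift_castSucc, simplexLift_last]
  simp only [mul_add, mul_sub, sub_mul, sum_add_distrib, sum_sub_distrib, mul_one, one_mul,
    ← mul_sum, ← sum_mul]
  rw [hswap]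
  ring

lemma sum_drift_mul_simplexLift (u : Fin m → ℝ) {c : Fin (m + 1) → ℝ} {s : ℝ}
    (hs : ∑ a, c a = s) (B : Fin (m + 1) → ℝ) :
    (∑ j, (c j.castSucc - s * u j) * (B j.castSucc - B (Fin.last m)))
      = ∑ a, (c a - s * simplexLift m u a) * B a := by
  rw [Fin.sum_univ_castSucc] at hs
  simp only [Fin.sum_univ_castSucc, simplexLift_castSucc, simplexLift_last]
  simp only [mul_sub, sub_mul, sum_sub_distrib, ← mul_sum, ← sum_mul]
  linear_combination (-B (Fin.last m)) * hs

theorem jacobiOp_comp_simplexLift {c : Fin (m + 1) → ℝ} {s : ℝ} (hs : ∑ a, c a = s)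
    {F : (Fin (m + 1) → ℝ) → ℝ} (hF : ContDiff ℝ 2 F) (y : Fin m → ℝ) :
    jacobiOp m (fun j => c j.castSucc) s (fun z => F (simplexLift m z)) y
      = jacobiOp (m + 1) c s F (simplexLift m y) := by
  rw [jacobiOp_eq_sum_sub_sum_add_sum, jacobiOp_eq_sum_sub_sum_add_sum,
    ← sum_diag_sub_quadForm_simplexLift y fun a b => pd a (pd b F) (simplexLift m y),
    ← sum_drift_mul_simplexLift y hs fun a => pd a F (simplexLift m y)]
  simp only [pd_pd_comp_simplexLift hF, pd_comp_simplexLift ((hF.differentiable two_ne_zero) _)]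

end

theorem jacobi_simplex_lift_general (n : ℕ)
    (κ : Fin n → ℝ)
    (F : (Fin n → ℝ) → ℝ) (hF : ContDiff ℝ 2 F)
    (lam' : Fin (n - 1) → ℝ) :
    jacobiOp (n - 1)
        (fun j => κ ⟨j.val, lt_of_lt_of_le j.isLt (Nat.sub_le n 1)⟩ + 1/2)
        ((∑ k, κ k) + (n : ℝ)/2)
        (fun y => F (fun j => if h : j.val < n - 1 then y ⟨j.val, h⟩
          else 1 - ∑ k, y k)) lam'
      = jacobiOp n (fun j => κ j + 1/2) ((∑ k, κ k) + (n : ℝ)/2) F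
          (fun j => if h : j.val < n - 1 then lam' ⟨j.val, h⟩
            else 1 - ∑ k, lam' k) := by
  rcases n with _ | m
  · simp [jacobiOp]
  have hs : ∑ a, (κ a + 1/2) = (∑ k, κ k) + ((m + 1 : ℕ) : ℝ)/2 := by
    simp only [sum_add_distrib, sum_const, card_univ, Fintype.card_fin, nsmul_eq_mul]
    push_cast
    ring
  exact jacobiOp_comp_simplexLift hs hF lam'

/-- Let `κ` be Jacobi parameters with `κ_j > -1/2`, `F : ℝⁿ → ℝ` a `C²`
function, and `F̂(λ₁,…,λ_{n-1}) = F(λ₁,…,λ_{n-1}, 1-λ₁-⋯-λ_{n-1})`. Then at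
every point `λ'`, `(G_κ F̂)(λ')` equals the lifted Jacobi operator `Ĝ_κ`
applied to `F` at `(λ', 1 - Σ λ')`. -/
theorem jacobi_simplex_lift (n : ℕ) (hn : 2 ≤ n)
    (κ : Fin n → ℝ) (hκ : ∀ j, -1/2 < κ j)
    (F : (Fin n → ℝ) → ℝ) (hF : ContDiff ℝ 2 F)
    (lam' : Fin (n - 1) → ℝ) :
    jacobiOp (n - 1)
        (fun j => κ ⟨j.val, lt_of_lt_of_le j.isLt (Nat.sub_le n 1)⟩ + 1/2)
        ((∑ k, κ k) + (n : ℝ)/2)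
        (fun y => F (fun j => if h : j.val < n - 1 then y ⟨j.val, h⟩
          else 1 - ∑ k, y k)) lam'
      = jacobiOp n (fun j => κ j + 1/2) ((∑ k, κ k) + (n : ℝ)/2) F
          (fun j => if h : j.val < n - 1 then lam' ⟨j.val, h⟩
            else 1 - ∑ k, lam' k) :=
  jacobi_simplex_lift_general n κ F hF lam'
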